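/- Let (g, ·, T) be a Rota-Baxter pre-Lie algebra of weight λ, (M, ·, T_M) a Rota-Baxter bimodule, and f: g → M a linear map. Define Φ¹(f) := f∘T - T_M∘f. Then for all a,b ∈ g: T(a)·Φ¹(f)(b) - T_M(a·Φ¹(f)(b)) + Φ¹(f)(a)·T(b) - T_M(Φ¹(f)(a)·b) - Φ¹(f)(a·T(b) + T(a)·b + λa·b) = (δf)(T(a)⊗T(b)) - T_M((δf)(T(a)⊗b) + (δf)(a⊗T(b)) + λ(δf)(a⊗b)), where (δf)(a⊗b) := a·f(b) + f(a)·b - f(a·b). (This is the commutativity of the chain map Φ in degree 1.) -/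
import Mathlib


/-- `Φ¹(f) := f∘T - T_M∘f`. -/
def rbPhi1 {k : Type*} [Field k] [CharZero k]
    {A M : Type*} [AddCommGroup A] [Module k A] [AddCommGroup M] [Module k M]
    (T : A →ₗ[k] A) (TM : M →ₗ[k] M) (f : A →ₗ[k] M) (a : A) : M :=
  f (T a) - TM (f a)

/-- `(δf)(a⊗b) := a·f(b) + f(a)·b - f(a·b)`. -/
def rbDelta1 {k : Type*} [Field k] [CharZero k]
    {A M : Type*} [AddCommGroup A] [Module k A] [AddCommGroup M] [Module k M]
    (mul : A →ₗ[k] A →ₗ[k] A)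
    (S : A →ₗ[k] M →ₗ[k] M) (P : M →ₗ[k] A →ₗ[k] M)
    (f : A →ₗ[k] M) (a b : A) : M :=
  S a (f b) + P (f a) b - f (mul a b)

/-- Commutativity of the chain map `Φ` in degree 1. -/
theorem stmt10 {k : Type*} [Field k] [CharZero k]
    {A M : Type*} [AddCommGroup A] [Module k A] [AddCommGroup M] [Module k M]
    (lam : k) (mul : A →ₗ[k] A →ₗ[k] A) (T : A →ₗ[k] A)
    (S : A →ₗ[k] M →ₗ[k] M) (P : M →ₗ[k] A →ₗ[k] M) (TM : M →ₗ[k] M)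
    (hpl : ∀ x y z : A, mul (mul x y) z - mul x (mul y z)
      = mul (mul y x) z - mul y (mul x z))
    (hRB : ∀ a b : A, mul (T a) (T b)
      = T (mul a (T b) + mul (T a) b + lam • mul a b))
    (hb1 : ∀ (a b : A) (m : M), S a (S b m) - S (mul a b) m
      = S b (S a m) - S (mul b a) m)
    (hb2 : ∀ (a b : A) (m : M), S a (P m b) - P (S a m) b
      = P m (mul a b) - P (P m a) b)
    (hTM1 : ∀ (a : A) (m : M), S (T a) (TM m)
      = TM (S a (TM m) + S (T a) m + lam • S a m))
    (hTM2 : ∀ (a : A) (m : M), P (TM m) (T a)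
      = TM (P m (T a) + P (TM m) a + lam • P m a))
    (f : A →ₗ[k] M) :
    ∀ a b : A,
      S (T a) (rbPhi1 T TM f b) - TM (S a (rbPhi1 T TM f b))
      + P (rbPhi1 T TM f a) (T b) - TM (P (rbPhi1 T TM f a) b)
      - rbPhi1 T TM f (mul a (T b) + mul (T a) b + lam • mul a b)
      = rbDelta1 mul S P f (T a) (T b)
        - TM (rbDelta1 mul S P f (T a) b + rbDelta1 mul S P f a (T b)
          + lam • rbDelta1 mul S P f a b) := by
  intro a b
  have h1 := hTM1 a (f b)
  have h2 := hTM2 b (f a)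
  have h3 := hRB a b
  simp only [rbPhi1, rbDelta1, map_add, map_sub, map_smul, smul_sub, smul_add] at *
  rw [h3]
  simp only [map_add, map_smul, LinearMap.sub_apply]
  rw [h1, h2]
  simp only [map_sub]
  abel
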